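/- arXiv:1307.6894 — 5 statements merged into one kernel-verified Lean document; each statement's English description precedes it below -/
import Mathlib

section
/- Let S be a set, let {*} be a one-element set, and let n ∈ ℕ. There is a bijection between Histⁿ({*}, S), the set of n-historical functions List {*} → List S, and the set of S-streams, i.e., functions ℕ≥1 → S. -/
/-!
An `n`-historical `f` commutes with truncation, `f (ℓ.take k) = (f ℓ).take (k + n)`, so it is
monotone for the prefix order. Over a one-element alphabet any two inputs are comparable prefixes,
hence all outputs `f ℓ` are prefixes of a single stream `σ`; conversely every stream `σ` yields the
historical function `ℓ ↦ σ(1) ⋯ σ(|ℓ| + n)`.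
-/

/-- A function `f : List R → List S` is *n-historical* if it sends lists of length `t`
to lists of length `t + n`, and it commutes with the operation `∂ = List.dropLast`
of dropping the last entry of a nonempty list. -/
def Historical {R S : Type*} (n : ℕ) (f : List R → List S) : Prop :=
  (∀ ℓ : List R, (f ℓ).length = ℓ.length + n) ∧
    ∀ ℓ : List R, 1 ≤ ℓ.length → (f ℓ).dropLast = f ℓ.dropLast

theorem List.isPrefix_of_length_le_of_subsingleton {α : Type*} [Subsingleton α] {l₁ l₂ : List α}
    (h : l₁.length ≤ l₂.length) : l₁ <+: l₂ :=
  List.prefix_iff_eq_take.mpr <|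
    List.ext_getElem (by simpa using h) fun _ _ _ => Subsingleton.elim _ _

namespace Historical

variable {R S : Type*} {n : ℕ} {f : List R → List S}

theorem apply_dropLast_concat (hf : Historical n f) (ℓ : List R) (a : R) :
    (f (ℓ ++ [a])).dropLast = f ℓ := by
  simpa using hf.2 (ℓ ++ [a]) (by simp)

theorem apply_take (hf : Historical n f) (ℓ : List R) (k : ℕ) :
    f (ℓ.take k) = (f ℓ).take (k + n) := by
  induction ℓ using List.reverseRecOn generalizing k with
  | nil => simp [List.take_of_length_le, hf.1]
  | append_singleton ℓ a ih =>
    rcases le_or_gt k ℓ.length with hk | hk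
    · rw [List.take_append_of_le_length hk, ih, ← hf.apply_dropLast_concat ℓ a,
        List.dropLast_eq_take, List.take_take, hf.1,
        min_eq_left (by simp only [List.length_append, List.length_singleton]; omega)]
    · rw [List.take_of_length_le (by simpa using hk),
        List.take_of_length_le (by simp [hf.1]; omega)]

theorem isPrefix_apply (hf : Historical n f) {ℓ₁ ℓ₂ : List R} (h : ℓ₁ <+: ℓ₂) :
    f ℓ₁ <+: f ℓ₂ := by
  rw [List.prefix_iff_eq_take.mp h, hf.apply_take]
  exact List.take_prefix _ _

theorem getElem_apply_eq_of_subsingleton [Subsingleton R] (hf : Historical n f)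
    (ℓ₁ ℓ₂ : List R) {i : ℕ} (h₁ : i < (f ℓ₁).length) (h₂ : i < (f ℓ₂).length) :
    (f ℓ₁)[i] = (f ℓ₂)[i] := by
  rcases le_total ℓ₁.length ℓ₂.length with h | h
  · exact (hf.isPrefix_apply (List.isPrefix_of_length_le_of_subsingleton h)).getElem h₁
  · exact ((hf.isPrefix_apply (List.isPrefix_of_length_le_of_subsingleton h)).getElem h₂).symm

end Historical

def ofStream {R S : Type*} (n : ℕ) (σ : ℕ+ → S) (ℓ : List R) : List S :=
  List.ofFn fun i : Fin (ℓ.length + n) => σ (Nat.succPNat i)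

theorem historical_ofStream {R S : Type*} (n : ℕ) (σ : ℕ+ → S) :
    Historical n (ofStream (R := R) n σ) := by
  refine ⟨fun ℓ => by simp [ofStream], fun ℓ hℓ => List.ext_getElem ?_ ?_⟩
  · simp [ofStream]; omega
  · intro i _ _
    simp [ofStream]

def historicalEquivStream (R S : Type*) [Unique R] (n : ℕ) :
    {f : List R → List S // Historical n f} ≃ (ℕ+ → S) where
  toFun f k := (f.1 (List.replicate k default))[k.natPred]'(by
    rw [f.2.1, List.length_replicate]; have := k.natPred_add_one; omega)
  invFun σ := ⟨ofStream n σ, historical_ofStream n σ⟩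
  left_inv := by
    rintro ⟨f, hf⟩
    ext1
    funext ℓ
    refine List.ext_getElem (by simp [ofStream, hf.1]) fun i _ _ => ?_
    simp only [ofStream, List.getElem_ofFn, Nat.natPred_succPNat]
    exact hf.getElem_apply_eq_of_subsingleton _ _ _ _
  right_inv σ := by
    funext k
    simp [ofStream]

/-- For a set `S` and `n ∈ ℕ`, there is a bijection between the set `Histⁿ({*}, S)` of
`n`-historical functions `List {*} → List S` and the set of `S`-streams `ℕ≥1 → S`. -/
theorem hist_unit_equiv_stream (S : Type*) (n : ℕ) :
    Nonempty ({f : List Unit → List S // Historical n f} ≃ (ℕ+ → S)) :=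
  ⟨historicalEquivStream Unit S n⟩
end

section
/- Let S and T be pointed sets and n ∈ ℕ. There is a bijection between Histⁿ(S, T), the set of n-historical functions List S → List T, and Histⁿ_strm(S, T), the set of n-historical stream propagators from S-streams to T-streams. -/
/-- The `t`-restriction of a stream `σ : ℕ≥1 → S`: the list `[σ(1), …, σ(t)]` of its
first `t` values. -/
def restrict {S : Type*} (σ : ℕ+ → S) (t : ℕ) : List S :=
  (List.range t).map fun i => σ ⟨i + 1, Nat.succ_pos i⟩

/-- A function from `S`-streams to `T`-streams is an *n-historical stream propagator*
if whenever two input streams agree up to time `t`, the output streams agree up to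
time `t + n`. -/
def HistoricalStream {S T : Type*} (n : ℕ) (F : (ℕ+ → S) → (ℕ+ → T)) : Prop :=
  ∀ (t : ℕ) (σ σ' : ℕ+ → S), restrict σ t = restrict σ' t →
    restrict (F σ) (t + n) = restrict (F σ') (t + n)

section Restrict

variable {S : Type*}

@[simp]
lemma length_restrict (σ : ℕ+ → S) (t : ℕ) : (restrict σ t).length = t := by
  simp [restrict]

lemma getElem_restrict (σ : ℕ+ → S) {t i : ℕ} (h : i < (restrict σ t).length) :
    (restrict σ t)[i] = σ ⟨i + 1, Nat.succ_pos i⟩ := by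
  simp [restrict]

lemma take_restrict (σ : ℕ+ → S) {s t : ℕ} (h : s ≤ t) :
    (restrict σ t).take s = restrict σ s := by
  simp [restrict, ← List.map_take, List.take_range, Nat.min_eq_left h]

lemma restrict_prefix_restrict (σ : ℕ+ → S) {s t : ℕ} (h : s ≤ t) :
    restrict σ s <+: restrict σ t :=
  take_restrict σ h ▸ List.take_prefix _ _

lemma dropLast_restrict (σ : ℕ+ → S) (t : ℕ) :
    (restrict σ (t + 1)).dropLast = restrict σ t := by
  rw [List.dropLast_eq_take, length_restrict, Nat.add_sub_cancel, take_restrict σ t.le_succ]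

def extendDefault [Inhabited S] (ℓ : List S) (k : ℕ+) : S :=
  ℓ.getD ((k : ℕ) - 1) default

lemma restrict_extendDefault [Inhabited S] (ℓ : List S) {m : ℕ} (h : m ≤ ℓ.length) :
    restrict (extendDefault ℓ) m = ℓ.take m := by
  refine List.ext_getElem (by simpa using h) fun i hi _ => ?_
  rw [length_restrict] at hi
  simp [getElem_restrict, extendDefault, List.getElem?_eq_getElem (by omega : i < ℓ.length)]

end Restrict

namespace Historical

variable {S T : Type*} {n : ℕ} {f : List S → List T}

theorem monotone (hf : Historical n f) {ℓ₁ ℓ₂ : List S} (h : ℓ₁ <+: ℓ₂) : f ℓ₁ <+: f ℓ₂ := by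
  induction ℓ₂ using List.reverseRecOn with
  | nil => rw [List.prefix_nil.mp h]
  | append_singleton ℓ a ih =>
    rcases List.prefix_concat_iff.mp h with rfl | h
    · exact List.prefix_refl _
    · have hdrop : f ℓ = (f (ℓ ++ [a])).dropLast := by
        rw [hf.2 _ (by simp), List.dropLast_concat]
      exact (ih h).trans (hdrop ▸ List.dropLast_prefix _)

lemma sub_one_lt_length_apply_restrict (hf : Historical n f) (σ : ℕ+ → S) (k : ℕ+) :
    (k : ℕ) - 1 < (f (restrict σ k)).length := by
  rw [hf.1, length_restrict]
  have := k.pos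
  omega

def toStream (hf : Historical n f) (σ : ℕ+ → S) (k : ℕ+) : T :=
  (f (restrict σ k))[(k : ℕ) - 1]'(hf.sub_one_lt_length_apply_restrict σ k)

theorem restrict_toStream (hf : Historical n f) (σ : ℕ+ → S) (t : ℕ) :
    restrict (hf.toStream σ) (t + n) = f (restrict σ t) := by
  refine List.ext_getElem (by simp [hf.1]) fun i hi hi' => ?_
  -- both `σ|≤(i+1)` and `σ|≤t` are prefixes of `σ|≤(i+1+t)`
  have hpre (s : ℕ) (hs : s ≤ i + 1 + t) :=
    hf.monotone (restrict_prefix_restrict σ hs)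
  rw [getElem_restrict]
  simp only [toStream, PNat.mk_coe, Nat.add_sub_cancel]
  rw [(hpre (i + 1) (by omega)).getElem, (hpre t (by omega)).getElem]

theorem historicalStream_toStream (hf : Historical n f) : HistoricalStream n hf.toStream := by
  intro t σ σ' h
  rw [hf.restrict_toStream, hf.restrict_toStream, h]

end Historical

namespace HistoricalStream

variable {S T : Type*} [Inhabited S] {n : ℕ} {F : (ℕ+ → S) → (ℕ+ → T)}

def toList (n : ℕ) (F : (ℕ+ → S) → (ℕ+ → T)) (ℓ : List S) : List T :=
  restrict (F (extendDefault ℓ)) (ℓ.length + n)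

theorem historical_toList (hF : HistoricalStream n F) : Historical n (toList n F) := by
  refine ⟨fun ℓ => by simp [toList], fun ℓ hℓ => ?_⟩
  have hagree : restrict (extendDefault ℓ) (ℓ.length - 1)
      = restrict (extendDefault ℓ.dropLast) (ℓ.length - 1) := by
    rw [restrict_extendDefault _ (Nat.sub_le _ _), restrict_extendDefault _ (by simp),
      List.take_of_length_le (l := ℓ.dropLast) (by simp), List.dropLast_eq_take]
  rw [toList, toList, List.length_dropLast,
    show ℓ.length + n = ℓ.length - 1 + n + 1 by omega, dropLast_restrict]
  exact hF _ _ _ hagree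

theorem toStream_toList (hF : HistoricalStream n F) : hF.historical_toList.toStream = F := by
  funext σ k
  have hk := k.pos
  have hagree : restrict (extendDefault (restrict σ k)) k = restrict σ k := by
    rw [restrict_extendDefault _ (by simp), List.take_of_length_le (by simp)]
  simp only [Historical.toStream, toList, length_restrict, hF _ _ _ hagree, getElem_restrict]
  exact congrArg (F σ) (PNat.eq (Nat.sub_add_cancel hk))

end HistoricalStream

theorem Historical.toList_toStream {S T : Type*} [Inhabited S] {n : ℕ} {f : List S → List T}
    (hf : Historical n f) : HistoricalStream.toList n hf.toStream = f := by
  funext ℓ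
  rw [HistoricalStream.toList, hf.restrict_toStream,
    restrict_extendDefault _ le_rfl, List.take_length]

theorem hist_equiv_histStream_general (S T : Type*) [Inhabited S] (n : ℕ) :
    Nonempty ({f : List S → List T // Historical n f} ≃
      {F : (ℕ+ → S) → (ℕ+ → T) // HistoricalStream n F}) :=
  ⟨{ toFun := fun f => ⟨f.2.toStream, f.2.historicalStream_toStream⟩
     invFun := fun F => ⟨HistoricalStream.toList n F.1, F.2.historical_toList⟩
     left_inv := fun f => Subtype.ext f.2.toList_toStream
     right_inv := fun F => Subtype.ext F.2.toStream_toList }⟩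

/-- For pointed sets `S`, `T` and `n ∈ ℕ`, there is a bijection between the set
`Histⁿ(S, T)` of `n`-historical functions `List S → List T` and the set
`Histⁿ_strm(S, T)` of `n`-historical stream propagators from `S`-streams to
`T`-streams. -/
theorem hist_equiv_histStream (S T : Type*) [Inhabited S] [Inhabited T] (n : ℕ) :
    Nonempty ({f : List S → List T // Historical n f} ≃
      {F : (ℕ+ → S) → (ℕ+ → T) // HistoricalStream n F}) :=
  hist_equiv_histStream_general S T n
end

section
/- Let τ : W → X, φ : X → Y, ψ : Y → Z be wiring diagrams. Then e_{ψ∘φ, τ} = h_{ψ,φ} ∘ e_{φ,τ} as functions In X ⊔ Out X → Sup(ψ∘φ). -/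
universe u

variable {InW OutW InX OutX InY OutY InZ OutZ Dτ Dφ Dψ : Type u}

/-- The map `e_{ψ,φ} = s_ψ|_{In Y} ⊔ id_{Out Y} : In Y ⊔ Out Y → Sup(ψ)` associated
to composable wiring diagrams `φ : X → Y` and `ψ : Y → Z`. -/
def eMap (sψ : OutZ ⊕ InY ⊕ Dψ → InZ ⊕ OutY ⊕ Dψ) :
    InY ⊕ OutY → InZ ⊕ OutY ⊕ Dψ
  | Sum.inl i => sψ (Sum.inr (Sum.inl i))
  | Sum.inr o => Sum.inr (Sum.inl o)

/-- The map `f_{ψ,φ} : Sup(ψ) → Sup(ψ∘φ)`, the identity on `In Z` and `D_ψ`, and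
equal to `s_φ|_{Out Y}` (landing in `Out X ⊔ D_φ` by non-instantaneity, encoded by
`sφOut`) on `Out Y`. -/
def fMap (sφOut : OutY → OutX ⊕ Dφ) :
    InZ ⊕ OutY ⊕ Dψ → InZ ⊕ OutX ⊕ Dφ ⊕ Dψ
  | Sum.inl z => Sum.inl z
  | Sum.inr (Sum.inl o) =>
      match sφOut o with
      | Sum.inl x => Sum.inr (Sum.inl x)
      | Sum.inr d => Sum.inr (Sum.inr (Sum.inl d))
  | Sum.inr (Sum.inr d) => Sum.inr (Sum.inr (Sum.inr d))

/-- The map `h_{ψ,φ} : Sup(φ) → Sup(ψ∘φ)`, equal to `f_{ψ,φ} ∘ s_ψ|_{In Y}` on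
`In Y` and the identity on `Out X` and `D_φ`. -/
def hMap (sψ : OutZ ⊕ InY ⊕ Dψ → InZ ⊕ OutY ⊕ Dψ) (sφOut : OutY → OutX ⊕ Dφ) :
    InY ⊕ OutX ⊕ Dφ → InZ ⊕ OutX ⊕ Dφ ⊕ Dψ
  | Sum.inl i => fMap sφOut (sψ (Sum.inr (Sum.inl i)))
  | Sum.inr (Sum.inl x) => Sum.inr (Sum.inl x)
  | Sum.inr (Sum.inr d) => Sum.inr (Sum.inr (Sum.inl d))

/-- The supplier assignment of the composite wiring diagram `ψ ∘ φ`, with delay set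
`D_φ ⊔ D_ψ`: it equals `h_{ψ,φ} ∘ s_φ` on `In X ⊔ D_φ` and `f_{ψ,φ} ∘ s_ψ` on
`Out Z ⊔ D_ψ`. -/
def compS (sφ : OutY ⊕ InX ⊕ Dφ → InY ⊕ OutX ⊕ Dφ)
    (sψ : OutZ ⊕ InY ⊕ Dψ → InZ ⊕ OutY ⊕ Dψ) (sφOut : OutY → OutX ⊕ Dφ) :
    OutZ ⊕ InX ⊕ Dφ ⊕ Dψ → InZ ⊕ OutX ⊕ Dφ ⊕ Dψ
  | Sum.inl z => fMap sφOut (sψ (Sum.inl z))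
  | Sum.inr (Sum.inl i) => hMap sψ sφOut (sφ (Sum.inr (Sum.inl i)))
  | Sum.inr (Sum.inr (Sum.inl d)) => hMap sψ sφOut (sφ (Sum.inr (Sum.inr d)))
  | Sum.inr (Sum.inr (Sum.inr d)) => fMap sφOut (sψ (Sum.inr (Sum.inr d)))

theorem e_comp_eq_h_comp_e_general
    (sφ : OutY ⊕ InX ⊕ Dφ → InY ⊕ OutX ⊕ Dφ)
    (sφOut : OutY → OutX ⊕ Dφ)
    (sψ : OutZ ⊕ InY ⊕ Dψ → InZ ⊕ OutY ⊕ Dψ) :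
    eMap (InY := InX) (OutY := OutX) (compS sφ sψ sφOut) =
      hMap sψ sφOut ∘ eMap sφ := by
  funext a
  cases a <;> rfl

/-- For wiring diagrams `τ : W → X`, `φ : X → Y`, `ψ : Y → Z`, one has
`e_{ψ∘φ, τ} = h_{ψ,φ} ∘ e_{φ,τ}` as functions `In X ⊔ Out X → Sup(ψ∘φ)`. -/
theorem e_comp_eq_h_comp_e
    [Fintype InW] [Fintype OutW] [Fintype InX] [Fintype OutX] [Fintype InY]
    [Fintype OutY] [Fintype InZ] [Fintype OutZ]
    [Fintype Dτ] [Fintype Dφ] [Fintype Dψ]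
    (sτ : OutX ⊕ InW ⊕ Dτ → InX ⊕ OutW ⊕ Dτ)
    (sτOut : OutX → OutW ⊕ Dτ)
    (hτ : ∀ x : OutX, sτ (Sum.inl x) = Sum.inr (sτOut x))
    (sφ : OutY ⊕ InX ⊕ Dφ → InY ⊕ OutX ⊕ Dφ)
    (sφOut : OutY → OutX ⊕ Dφ)
    (hφ : ∀ y : OutY, sφ (Sum.inl y) = Sum.inr (sφOut y))
    (sψ : OutZ ⊕ InY ⊕ Dψ → InZ ⊕ OutY ⊕ Dψ)
    (sψOut : OutZ → OutY ⊕ Dψ)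
    (hψ : ∀ z : OutZ, sψ (Sum.inl z) = Sum.inr (sψOut z)) :
    eMap (InY := InX) (OutY := OutX) (compS sφ sψ sφOut) =
      hMap sψ sφOut ∘ eMap sφ :=
  e_comp_eq_h_comp_e_general sφ sφOut sψ
end

section
/- Let A, B be sets and let f : List A → List B be a 1-historical function. Define C : List A → List (A × B) by well-founded recursion on length: C([]) = [] and, for ℓ of length ≥ 1, C(ℓ) = zip ℓ (f (map fst (C(∂ℓ)))). Then for every list ℓ of length ≥ 1, C(ℓ) = zip ℓ (f(∂ℓ)). -/
/-- The cascade of a function `f : List A → List B`: `C([]) = []` and for nonempty `ℓ`,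
`C(ℓ) = zip ℓ (f (map fst (C(∂ℓ))))`. -/
def cascade {A B : Type*} (f : List A → List B) : List A → List (A × B)
  | [] => []
  | a :: as => List.zip (a :: as) (f (List.map Prod.fst (cascade f (a :: as).dropLast)))
termination_by ℓ => ℓ.length
decreasing_by simp [List.length_dropLast]

/-- Since `f` lengthens lists, the `zip` in each step of the cascade loses no entry of `ℓ`. -/
theorem map_fst_cascade {A B : Type*} {f : List A → List B}
    (hf : ∀ ℓ, ℓ.length < (f ℓ).length) (ℓ : List A) :
    (cascade f ℓ).map Prod.fst = ℓ := by
  induction ℓ using cascade.induct with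
  | case1 => simp [cascade]
  | case2 a as ih =>
    rw [cascade, ih, List.map_fst_zip]
    simpa using hf (a :: as).dropLast

theorem cascade_eq_zip_general {A B : Type*} (f : List A → List B) (hf : Historical 1 f)
    (ℓ : List A) :
    cascade f ℓ = List.zip ℓ (f ℓ.dropLast) := by
  have hlt : ∀ ℓ : List A, ℓ.length < (f ℓ).length := fun ℓ => by simp [hf.1 ℓ]
  cases ℓ with
  | nil => simp [cascade]
  | cons a as => rw [cascade, map_fst_cascade hlt]

/-- If `f` is 1-historical, then for every nonempty list `ℓ`,
the cascade satisfies `C(ℓ) = zip ℓ (f (∂ℓ))`. -/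
theorem cascade_eq_zip {A B : Type*} (f : List A → List B) (hf : Historical 1 f)
    (ℓ : List A) (hℓ : 1 ≤ ℓ.length) :
    cascade f ℓ = List.zip ℓ (f ℓ.dropLast) :=
  cascade_eq_zip_general f hf ℓ
end

section
/- Define plus : List (ℕ × ℕ) → List ℕ by plus(ℓ) = 1 :: map (fun p => p.1 + p.2) ℓ, and define C : List ℕ → List (ℕ × ℕ) by well-founded recursion on length: C([]) = [] and, for ℓ of length t ≥ 1, C(ℓ) = zip ℓ (plus(C(∂ℓ))). Then for every list ℓ of length t and every n with 1 ≤ n ≤ t + 1, the n-th entry of plus(C(ℓ)) equals 1 + Σ_{i=1}^{n−1} ℓ(i). In particular the propagator ℓ ↦ plus(C(ℓ)) computes "one plus the running total" of its input stream. -/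
/-!
Unfolding the cascade at the last entry, `plus (C (ℓ ++ [a]))` is `1` followed by the entrywise
sum of `ℓ ++ [a]` with `plus (C ℓ)`. The stream `1, 1 + ℓ(1), 1 + ℓ(1) + ℓ(2), …` obeys the
same recursion, so the two agree by induction on `ℓ` from the right.
-/

/-- The addition propagator: it sends a list of pairs of natural numbers to `1`
followed by the list of coordinatewise sums (a 1-historical function). -/
def plusProp : List (ℕ × ℕ) → List ℕ :=
  fun ℓ => 1 :: ℓ.map fun p => p.1 + p.2

/-- The cascade of the addition propagator along the feedback wiring diagram:
`C([]) = []` and, for nonempty `ℓ`, `C(ℓ) = zip ℓ (plus (C(∂ℓ)))`. -/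
def cascadePlus : List ℕ → List (ℕ × ℕ)
  | [] => []
  | a :: as => List.zip (a :: as) (plusProp (cascadePlus (a :: as).dropLast))
termination_by ℓ => ℓ.length
decreasing_by simp [List.length_dropLast]

lemma cascadePlus_concat (as : List ℕ) (a : ℕ) :
    cascadePlus (as ++ [a]) = (as ++ [a]).zip (plusProp (cascadePlus as)) := by
  cases as with
  | nil => simp [cascadePlus]
  | cons b bs =>
    rw [List.cons_append, cascadePlus, ← List.cons_append, List.dropLast_concat]

def runningTotal (ℓ : List ℕ) : List ℕ :=
  (List.range (ℓ.length + 1)).map fun n => 1 + (ℓ.take n).sum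

lemma runningTotal_concat (as : List ℕ) (a : ℕ) :
    runningTotal (as ++ [a]) =
      1 :: ((as ++ [a]).zip (runningTotal as)).map fun p => p.1 + p.2 := by
  rw [runningTotal, List.length_append, List.length_singleton, List.range_succ_eq_map,
    List.map_cons, List.map_map]
  refine congrArg₂ _ rfl (List.ext_getElem (by simp [runningTotal]) fun i hi _ => ?_)
  have hi : i ≤ as.length := by simpa using hi
  have hlt : i < (as ++ [a]).length := by simp; omega
  have hsum : ((as ++ [a]).take (i + 1)).sum = (as.take i).sum + (as ++ [a])[i] := by
    rw [List.sum_take_succ _ i hlt, List.take_append_of_le_length hi]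
  simp only [Function.comp_apply, List.getElem_map, List.getElem_range, List.getElem_zip,
    runningTotal, Nat.succ_eq_add_one, hsum]
  omega

theorem plusProp_cascadePlus (ℓ : List ℕ) : plusProp (cascadePlus ℓ) = runningTotal ℓ := by
  induction ℓ using List.reverseRecOn with
  | nil => simp [cascadePlus, plusProp, runningTotal]
  | append_singleton as a ih => rw [cascadePlus_concat, ih, runningTotal_concat, plusProp]

/-- The propagator `ℓ ↦ plus (C(ℓ))` computes "one plus the running total": for every
list `ℓ` of length `t` and every `n` with `1 ≤ n ≤ t + 1`, the `n`-th entry (1-indexed)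
of `plus (C(ℓ))` is `1 + Σ_{i=1}^{n-1} ℓ(i)`. -/
theorem plus_cascade_running_total (ℓ : List ℕ) :
    (plusProp (cascadePlus ℓ)).length = ℓ.length + 1 ∧
      ∀ n : ℕ, 1 ≤ n → n ≤ ℓ.length + 1 →
        (plusProp (cascadePlus ℓ)).getD (n - 1) 0 = 1 + (ℓ.take (n - 1)).sum := by
  rw [plusProp_cascadePlus]
  refine ⟨by simp [runningTotal], fun n h1 h2 => ?_⟩
  rw [List.getD_eq_getElem _ _ (by simp [runningTotal]; omega)]
  simp [runningTotal]
end
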